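/- arXiv:1903.05186 — 5 statements merged into one kernel-verified Lean document; each statement's English description precedes it below -/
import Mathlib

section
/- The AGM conjunction function is monotone: for all x, y, u, v ∈ [−1, 1] with x ≤ u and y ≤ v, it holds that △(x, y) ≤ △(u, v). -/
/-- AGM conjunction function. -/
noncomputable def agmAnd (x y : ℝ) : ℝ :=
  if 0 < x ∧ 0 < y then Real.sqrt ((1 + x) * (1 + y)) - 1
  else (min x 0 + min y 0) / 2

/-! Both branches of `agmAnd` are monotone, and passing from one to the other only goes up:
the branch of averaged negative parts is nonpositive while the geometric-mean branch is
positive. -/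

section

variable {x y u v : ℝ}

lemma agmAnd_of_pos (hx : 0 < x) (hy : 0 < y) :
    agmAnd x y = √((1 + x) * (1 + y)) - 1 :=
  if_pos ⟨hx, hy⟩

lemma agmAnd_of_not_pos (h : ¬(0 < x ∧ 0 < y)) :
    agmAnd x y = (min x 0 + min y 0) / 2 :=
  if_neg h

lemma agmAnd_nonpos_of_not_pos (h : ¬(0 < x ∧ 0 < y)) : agmAnd x y ≤ 0 := by
  rw [agmAnd_of_not_pos h]
  linarith [min_le_right x 0, min_le_right y 0]

lemma agmAnd_pos (hx : 0 < x) (hy : 0 < y) : 0 < agmAnd x y := by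
  have h : 1 < (1 + x) * (1 + y) := by nlinarith
  rw [agmAnd_of_pos hx hy, sub_pos]
  exact Real.lt_sqrt_of_sq_lt (by simpa using h)

lemma agmAnd_le_agmAnd (hxu : x ≤ u) (hyv : y ≤ v) : agmAnd x y ≤ agmAnd u v := by
  by_cases hxy : 0 < x ∧ 0 < y
  · obtain ⟨hx, hy⟩ := hxy
    rw [agmAnd_of_pos hx hy, agmAnd_of_pos (hx.trans_le hxu) (hy.trans_le hyv)]
    gcongr
    linarith
  by_cases huv : 0 < u ∧ 0 < v
  · exact (agmAnd_nonpos_of_not_pos hxy).trans (agmAnd_pos huv.1 huv.2).le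
  rw [agmAnd_of_not_pos hxy, agmAnd_of_not_pos huv]
  gcongr

end

/-- The AGM conjunction function is monotone on [-1,1]². -/
theorem agmAnd_mono :
    ∀ x y u v : ℝ, x ∈ Set.Icc (-1 : ℝ) 1 → y ∈ Set.Icc (-1 : ℝ) 1 →
      u ∈ Set.Icc (-1 : ℝ) 1 → v ∈ Set.Icc (-1 : ℝ) 1 →
      x ≤ u → y ≤ v → agmAnd x y ≤ agmAnd u v :=
  fun _ _ _ _ _ _ _ _ hxu hyv => agmAnd_le_agmAnd hxu hyv
end

section
/- DeMorgan's law for AGM robustness: for all x, y ∈ [−1, 1] with x ≠ 0 and y ≠ 0, it holds that ▽(x, y) = −△(−x, −y). -/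
/-- AGM disjunction function. -/
noncomputable def agmOr (x y : ℝ) : ℝ :=
  if 0 < x ∨ 0 < y then (max x 0 + max y 0) / 2
  else 1 - Real.sqrt ((1 - x) * (1 - y))

/-- AGM negation. -/
def agmNeg (x : ℝ) : ℝ := -x

theorem agmOr_eq_neg_agmAnd_neg_of_pos_or_pos {x y : ℝ} (h : 0 < x ∨ 0 < y) :
    agmOr x y = -agmAnd (-x) (-y) := by
  have hAnd : ¬(0 < -x ∧ 0 < -y) := by
    rintro ⟨hx, hy⟩
    rcases h with h | h <;> linarith
  have min_neg (a : ℝ) : min (-a) 0 = -max a 0 := by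
    rw [← neg_zero, min_neg_neg, neg_zero]
  rw [agmOr, agmAnd, if_pos h, if_neg hAnd, min_neg, min_neg]
  ring

theorem agmOr_eq_neg_agmAnd_neg_of_neg_of_neg {x y : ℝ} (hx : x < 0) (hy : y < 0) :
    agmOr x y = -agmAnd (-x) (-y) := by
  have hOr : ¬(0 < x ∨ 0 < y) := by
    rintro (h | h) <;> linarith
  rw [agmOr, agmAnd, if_neg hOr, if_pos ⟨neg_pos.mpr hx, neg_pos.mpr hy⟩, ← sub_eq_add_neg, ← sub_eq_add_neg]
  ring

theorem agmOr_eq_neg_agmAnd_neg {x y : ℝ} (hx : x ≠ 0) (hy : y ≠ 0) :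
    agmOr x y = -agmAnd (-x) (-y) := by
  by_cases h : 0 < x ∨ 0 < y
  · exact agmOr_eq_neg_agmAnd_neg_of_pos_or_pos h
  · rw [not_or, not_lt, not_lt] at h
    exact agmOr_eq_neg_agmAnd_neg_of_neg_of_neg (h.1.lt_of_ne hx) (h.2.lt_of_ne hy)

/-- DeMorgan's law for AGM robustness. -/
theorem agm_deMorgan :
    ∀ x y : ℝ, x ∈ Set.Icc (-1 : ℝ) 1 → y ∈ Set.Icc (-1 : ℝ) 1 → x ≠ 0 → y ≠ 0 →
      agmOr x y = agmNeg (agmAnd (agmNeg x) (agmNeg y)) :=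
  fun _ _ _ _ hx hy => agmOr_eq_neg_agmAnd_neg hx hy
end

section
/- Kleene algebra condition for AGM robustness: for all x, y ∈ [−1, 1], △(x, −x) ≤ ▽(y, −y). -/
theorem agmAnd_nonpos {x y : ℝ} (h : x ≤ 0 ∨ y ≤ 0) : agmAnd x y ≤ 0 := by
  have hnot : ¬(0 < x ∧ 0 < y) := by
    rintro ⟨hx, hy⟩
    rcases h with h | h <;> linarith
  rw [agmAnd, if_neg hnot]
  linarith [min_le_right x 0, min_le_right y 0]

theorem agmOr_nonneg {x y : ℝ} (h : 0 < x ∨ 0 < y) : 0 ≤ agmOr x y := by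
  rw [agmOr, if_pos h]
  positivity

theorem agmOr_zero_zero : agmOr 0 0 = 0 := by
  simp [agmOr]

theorem agmAnd_neg_self_nonpos (x : ℝ) : agmAnd x (agmNeg x) ≤ 0 := by
  apply agmAnd_nonpos
  rcases le_total x 0 with hx | hx
  · exact Or.inl hx
  · exact Or.inr (neg_nonpos.mpr hx)

theorem agmOr_neg_self_nonneg (y : ℝ) : 0 ≤ agmOr y (agmNeg y) := by
  rcases lt_trichotomy y 0 with hy | rfl | hy
  · exact agmOr_nonneg (Or.inr (neg_pos.mpr hy))
  · rw [agmNeg, neg_zero, agmOr_zero_zero]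
  · exact agmOr_nonneg (Or.inl hy)

/-- Kleene algebra condition for AGM robustness. -/
theorem agm_kleene :
    ∀ x y : ℝ, x ∈ Set.Icc (-1 : ℝ) 1 → y ∈ Set.Icc (-1 : ℝ) 1 →
      agmAnd x (agmNeg x) ≤ agmOr y (agmNeg y) :=
  fun x y _ _ => (agmAnd_neg_self_nonpos x).trans (agmOr_neg_self_nonneg y)
end

section
/- Soundness of the m-ary AGM conjunction (covering both the conjunction and the globally operator): let s be a nonempty finite set of indices with cardinality N and f a real-valued function on s with f(i) ∈ [−1, 1] for all i ∈ s. Define A(f) = (∏_{i∈s} (1 + f(i)))^{1/N} − 1 if f(i) > 0 for all i ∈ s, and A(f) = (1/N) ∑_{i∈s} min(f(i), 0) otherwise. Then A(f) > 0 if and only if f(i) > 0 for all i ∈ s, and A(f) < 0 if and only if there exists i ∈ s with f(i) < 0. -/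
/-!
If every `f i` is positive, the product of the `1 + f i` exceeds `1`, and so does its positive
real root. Otherwise the value is the mean of the nonpositive numbers `min (f i) 0`, which is
never positive and is negative exactly when some `f i` is.
-/

open Finset in
/-- m-ary AGM conjunction value over a finite index set. -/
noncomputable def agmConjFin {ι : Type*} (s : Finset ι) (f : ι → ℝ) : ℝ :=
  if ∀ i ∈ s, 0 < f i then
    (∏ i ∈ s, (1 + f i)) ^ ((s.card : ℝ)⁻¹) - 1
  else
    (∑ i ∈ s, min (f i) 0) / s.card

namespace Finset

variable {ι : Type*} {s : Finset ι} {f : ι → ℝ}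

theorem one_lt_prod_one_add (hs : s.Nonempty) (hf : ∀ i ∈ s, 0 < f i) :
    1 < ∏ i ∈ s, (1 + f i) :=
  calc (1 : ℝ) = ∏ _i ∈ s, 1 := prod_const_one.symm
    _ < ∏ i ∈ s, (1 + f i) :=
      prod_lt_prod_of_nonempty (fun _ _ => one_pos) (fun i hi => lt_add_of_pos_right 1 (hf i hi)) hs

theorem sum_min_zero_neg_iff : ∑ i ∈ s, min (f i) 0 < 0 ↔ ∃ i ∈ s, f i < 0 := by
  rw [sum_neg_iff_of_nonpos fun i _ => min_le_right (f i) 0]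
  simp only [min_lt_iff, lt_irrefl, or_false]

end Finset

section

variable {ι : Type*} {s : Finset ι} {f : ι → ℝ}

theorem agmConjFin_pos_of_forall_pos (hs : s.Nonempty) (hf : ∀ i ∈ s, 0 < f i) :
    0 < agmConjFin s f := by
  rw [agmConjFin, if_pos hf, sub_pos]
  exact Real.one_lt_rpow (Finset.one_lt_prod_one_add hs hf) (by simp [hs.card_pos])

theorem agmConjFin_of_not_forall_pos (hf : ¬∀ i ∈ s, 0 < f i) :
    agmConjFin s f = (∑ i ∈ s, min (f i) 0) / s.card :=
  if_neg hf

theorem agmConjFin_nonpos_of_not_forall_pos (hf : ¬∀ i ∈ s, 0 < f i) : agmConjFin s f ≤ 0 := by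
  rw [agmConjFin_of_not_forall_pos hf]
  exact div_nonpos_of_nonpos_of_nonneg (Finset.sum_nonpos fun i _ => min_le_right _ _) (by positivity)

theorem agmConjFin_neg_iff_of_not_forall_pos (hs : s.Nonempty) (hf : ¬∀ i ∈ s, 0 < f i) :
    agmConjFin s f < 0 ↔ ∃ i ∈ s, f i < 0 := by
  rw [agmConjFin_of_not_forall_pos hf, div_lt_iff₀ (by exact_mod_cast hs.card_pos), zero_mul,
    Finset.sum_min_zero_neg_iff]

end

theorem agmConjFin_sound_general {ι : Type*} (s : Finset ι) (hs : s.Nonempty) (f : ι → ℝ) :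
    (0 < agmConjFin s f ↔ ∀ i ∈ s, 0 < f i) ∧
    (agmConjFin s f < 0 ↔ ∃ i ∈ s, f i < 0) := by
  by_cases hpos : ∀ i ∈ s, 0 < f i
  · have hA := agmConjFin_pos_of_forall_pos hs hpos
    refine ⟨iff_of_true hA hpos, iff_of_false hA.not_gt ?_⟩
    rintro ⟨i, hi, hneg⟩
    exact (hpos i hi).not_gt hneg
  · exact ⟨iff_of_false (agmConjFin_nonpos_of_not_forall_pos hpos).not_gt hpos,
      agmConjFin_neg_iff_of_not_forall_pos hs hpos⟩

/-- Soundness of the m-ary AGM conjunction. -/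
theorem agmConjFin_sound {ι : Type*} (s : Finset ι) (hs : s.Nonempty) (f : ι → ℝ)
    (hf : ∀ i ∈ s, f i ∈ Set.Icc (-1 : ℝ) 1) :
    (0 < agmConjFin s f ↔ ∀ i ∈ s, 0 < f i) ∧
    (agmConjFin s f < 0 ↔ ∃ i ∈ s, f i < 0) :=
  agmConjFin_sound_general s hs f
end

section
/- Soundness of the m-ary AGM disjunction (covering both the disjunction and the eventually operator): let s be a nonempty finite set of indices with cardinality N and f a real-valued function on s with f(i) ∈ [−1, 1] for all i ∈ s. Define D(f) = (1/N) ∑_{i∈s} max(f(i), 0) if there exists i ∈ s with f(i) > 0, and D(f) = 1 − (∏_{i∈s} (1 − f(i)))^{1/N} otherwise. Then D(f) > 0 if and only if there exists i ∈ s with f(i) > 0, and D(f) < 0 if and only if f(i) ≤ 0 for all i ∈ s and there exists i ∈ s with f(i) < 0. -/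
/-! If some `f i` is positive, `D f` is the mean of the positive parts, hence positive. Otherwise
every factor `1 - f i` is at least `1`, so their geometric mean is at least `1` and `D f ≤ 0`;
the geometric mean exceeds `1` exactly when some factor does, i.e. when some `f i` is negative. -/

open Finset in
/-- m-ary AGM disjunction value over a finite index set. -/
noncomputable def agmDisjFin {ι : Type*} (s : Finset ι) (f : ι → ℝ) : ℝ :=
  if ∃ i ∈ s, 0 < f i then
    (∑ i ∈ s, max (f i) 0) / s.card
  else
    1 - (∏ i ∈ s, (1 - f i)) ^ ((s.card : ℝ)⁻¹)

namespace agmDisjFin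

variable {ι : Type*} {s : Finset ι} {f : ι → ℝ}

lemma pos_of_exists_pos (h : ∃ i ∈ s, 0 < f i) : 0 < agmDisjFin s f := by
  obtain ⟨j, hj, hj_pos⟩ := h
  rw [agmDisjFin, if_pos ⟨j, hj, hj_pos⟩]
  refine div_pos (Finset.sum_pos' (fun i _ => le_max_right _ _) ⟨j, hj, ?_⟩) ?_
  · exact lt_max_of_lt_left hj_pos
  · exact_mod_cast Finset.card_pos.mpr ⟨j, hj⟩

lemma eq_one_sub_rpow_of_nonpos (h : ∀ i ∈ s, f i ≤ 0) :
    agmDisjFin s f = 1 - (∏ i ∈ s, (1 - f i)) ^ ((s.card : ℝ)⁻¹) := by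
  rw [agmDisjFin, if_neg]
  push Not
  exact h

lemma nonpos_of_forall_nonpos (h : ∀ i ∈ s, f i ≤ 0) : agmDisjFin s f ≤ 0 := by
  have hprod : 1 ≤ ∏ i ∈ s, (1 - f i) :=
    Finset.one_le_prod fun i hi => by linarith [h i hi]
  rw [eq_one_sub_rpow_of_nonpos h, sub_nonpos]
  exact Real.one_le_rpow hprod (by positivity)

lemma neg_of_forall_nonpos_of_exists_neg (h : ∀ i ∈ s, f i ≤ 0) (hneg : ∃ i ∈ s, f i < 0) :
    agmDisjFin s f < 0 := by
  obtain ⟨j, hj, hj_neg⟩ := hneg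
  have hprod : ∏ _i ∈ s, (1 : ℝ) < ∏ i ∈ s, (1 - f i) :=
    Finset.prod_lt_prod (fun _ _ => one_pos) (fun i hi => by linarith [h i hi])
      ⟨j, hj, by linarith⟩
  rw [Finset.prod_const_one] at hprod
  have hcard : (0 : ℝ) < s.card := by exact_mod_cast Finset.card_pos.mpr ⟨j, hj⟩
  rw [eq_one_sub_rpow_of_nonpos h, sub_neg]
  exact Real.one_lt_rpow hprod (inv_pos.mpr hcard)

lemma eq_zero_of_forall_eq_zero (h : ∀ i ∈ s, f i = 0) : agmDisjFin s f = 0 := by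
  rw [eq_one_sub_rpow_of_nonpos fun i hi => (h i hi).le,
    Finset.prod_eq_one fun i hi => by rw [h i hi, sub_zero], Real.one_rpow, sub_self]

lemma pos_iff : 0 < agmDisjFin s f ↔ ∃ i ∈ s, 0 < f i := by
  refine ⟨fun hD => ?_, pos_of_exists_pos⟩
  by_contra! h
  exact hD.not_ge (nonpos_of_forall_nonpos h)

lemma neg_iff : agmDisjFin s f < 0 ↔ (∀ i ∈ s, f i ≤ 0) ∧ ∃ i ∈ s, f i < 0 := by
  refine ⟨fun hD => ?_, fun ⟨h, hneg⟩ => neg_of_forall_nonpos_of_exists_neg h hneg⟩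
  have hnonpos : ∀ i ∈ s, f i ≤ 0 := by
    by_contra! h
    exact hD.not_gt (pos_of_exists_pos h)
  refine ⟨hnonpos, ?_⟩
  by_contra! h
  exact hD.ne (eq_zero_of_forall_eq_zero fun i hi => le_antisymm (hnonpos i hi) (h i hi))

end agmDisjFin

theorem agmDisjFin_sound_general {ι : Type*} (s : Finset ι) (f : ι → ℝ) :
    (0 < agmDisjFin s f ↔ ∃ i ∈ s, 0 < f i) ∧
    (agmDisjFin s f < 0 ↔ (∀ i ∈ s, f i ≤ 0) ∧ ∃ i ∈ s, f i < 0) :=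
  ⟨agmDisjFin.pos_iff, agmDisjFin.neg_iff⟩

/-- Soundness of the m-ary AGM disjunction. -/
theorem agmDisjFin_sound {ι : Type*} (s : Finset ι) (hs : s.Nonempty) (f : ι → ℝ)
    (hf : ∀ i ∈ s, f i ∈ Set.Icc (-1 : ℝ) 1) :
    (0 < agmDisjFin s f ↔ ∃ i ∈ s, 0 < f i) ∧
    (agmDisjFin s f < 0 ↔ (∀ i ∈ s, f i ≤ 0) ∧ ∃ i ∈ s, f i < 0) :=
  agmDisjFin_sound_general s f
end
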